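/- Let G be a chordal bipartite graph with κ(G) = k ≥ 1, and let uv be a bisimplicial edge of G. Then κ(G ⊖ uv) ≥ k − 1. -/

import Mathlib

open SimpleGraph

variable {V : Type*}

/-- `S` is a vertex cut set of `G`: deleting the vertices of `S` disconnects the graph. -/
def SimpleGraph.IsVertexCutSet (G : SimpleGraph V) (S : Set V) : Prop :=
  ¬ (G.induce Sᶜ).Preconnected

open scoped Classical in
/-- The vertex connectivity of a finite simple graph: the minimum size of a vertex cut if
one exists (i.e. if the graph is not complete), and `|V| - 1` otherwise. -/
noncomputable def SimpleGraph.vertexConnectivity [Finite V] (G : SimpleGraph V) : ℕ :=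
  if ∃ S : Set V, G.IsVertexCutSet S then
    sInf {n | ∃ S : Set V, S.ncard = n ∧ G.IsVertexCutSet S}
  else Nat.card V - 1

/-- An edge `uv` is bisimplicial if `N(u) ∪ N(v)` induces a complete bipartite graph
with parts `N(u)` and `N(v)`. -/
def SimpleGraph.IsBisimplicialEdge (G : SimpleGraph V) (u v : V) : Prop :=
  G.Adj u v ∧ ∀ x y, G.Adj u x → G.Adj v y → x ≠ y → G.Adj x y

/-- A cycle (closed walk) has a chord: an edge of `G` joining two vertices of the cycle
that is not an edge of the cycle. -/
def SimpleGraph.CycleHasChord (G : SimpleGraph V) {a : V} (c : G.Walk a a) : Prop :=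
  ∃ x y, x ∈ c.support ∧ y ∈ c.support ∧ G.Adj x y ∧ s(x, y) ∉ c.edges

/-- A graph is chordal bipartite if it is bipartite and every cycle of length at least 6
has a chord. -/
def SimpleGraph.ChordalBipartite (G : SimpleGraph V) : Prop :=
  G.Colorable 2 ∧ ∀ ⦃a : V⦄ (c : G.Walk a a), c.IsCycle → 6 ≤ c.length → G.CycleHasChord c

/-!
If `T` is a vertex cut of `G - {u, v}`, then `T ∪ {u}` or `T ∪ {v}` is a vertex cut of `G`:
otherwise two vertices `x`, `y` separated by `T` in `G - {u, v}` are joined by paths through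
`u` and through `v`, so `x` reaches a neighbour of `u` and `y` a neighbour of `v` inside
`G - T - {u, v}`, and bisimpliciality makes these two neighbours adjacent (or equal).
Hence `κ(G) ≤ κ(G - {u, v}) + 1`. When `G - {u, v}` has no cut at all, its connectivity is
`|V| - 3`; a third vertex `w` is non-adjacent to `u` or to `v` since `G` has no triangle, so
`G` is not complete and `κ(G) ≤ |V| - 2`.
-/

namespace SimpleGraph

variable {G : SimpleGraph V} {u v : V}

lemma isVertexCutSet_compl_pair {x y : V} (hne : x ≠ y) (hxy : ¬G.Adj x y) :
    G.IsVertexCutSet {x, y}ᶜ := by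
  rw [IsVertexCutSet, compl_compl]
  intro h
  obtain ⟨w⟩ := h ⟨x, by simp⟩ ⟨y, by simp⟩
  cases w with
  | nil => exact hne rfl
  | @cons _ z _ hadj _ =>
    obtain ⟨z, rfl | rfl⟩ := z
    exacts [hadj.ne rfl, hxy hadj]

noncomputable def induceInduceIso (A : Set V) (B : Set A) :
    (G.induce A).induce B ≃g G.induce (Subtype.val '' B) where
  toEquiv := Equiv.Set.image _ B Subtype.val_injective
  map_rel_iff' := Iff.rfl

lemma exists_adj_reachable_of_walk_induce_insert {s : Set V} {a b : ↥(insert u s)}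
    (w : (G.induce (insert u s)).Walk a b) (ha : a.1 ∈ s) (hb : b.1 ∈ s) :
    (G.induce s).Reachable ⟨a, ha⟩ ⟨b, hb⟩ ∨
      ∃ z, ∃ hz : z ∈ s, G.Adj u z ∧ (G.induce s).Reachable ⟨a, ha⟩ ⟨z, hz⟩ := by
  induction w with
  | nil => exact .inl .rfl
  | @cons a c b hac p ih =>
    obtain hcu | hc := c.2
    · have hua : G.Adj c a := hac.symm
      rw [hcu] at hua
      exact .inr ⟨a, ha, hua, .rfl⟩
    · have hac' : (G.induce s).Adj ⟨a, ha⟩ ⟨c, hc⟩ := hac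
      obtain h | ⟨z, hz, huz, hcz⟩ := ih hc hb
      exacts [.inl (hac'.reachable.trans h), .inr ⟨z, hz, huz, hac'.reachable.trans hcz⟩]

lemma IsBisimplicialEdge.preconnected_induce {s : Set V} (huv : G.IsBisimplicialEdge u v)
    (hu : (G.induce (insert u s)).Preconnected) (hv : (G.induce (insert v s)).Preconnected) :
    (G.induce s).Preconnected := by
  rintro ⟨x, hx⟩ ⟨y, hy⟩
  obtain h | ⟨x', hx', hux', hxx'⟩ :=
    exists_adj_reachable_of_walk_induce_insert (hu ⟨x, .inr hx⟩ ⟨y, .inr hy⟩).some hx hy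
  · exact h
  obtain h | ⟨y', hy', hvy', hyy'⟩ :=
    exists_adj_reachable_of_walk_induce_insert (hv ⟨y, .inr hy⟩ ⟨x, .inr hx⟩).some hy hx
  · exact h.symm
  obtain rfl | hne := eq_or_ne x' y'
  · exact hxx'.trans hyy'.symm
  · have hx'y' : (G.induce s).Adj ⟨x', hx'⟩ ⟨y', hy'⟩ := huv.2 x' y' hux' hvy' hne
    exact hxx'.trans (hx'y'.reachable.trans hyy'.symm)

lemma compl_insert_image_val {A : Set V} {T : Set A} (hA : Aᶜ = {u, v}) (huv : u ≠ v) :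
    (insert u (Subtype.val '' T))ᶜ = insert v (Subtype.val '' Tᶜ) := by
  have hmem : ∀ z, z ∈ A ↔ z ≠ u ∧ z ≠ v := fun z => by
    rw [← not_iff_not, ← Set.mem_compl_iff, hA]
    simp only [Set.mem_insert_iff, Set.mem_singleton_iff]
    tauto
  ext z
  by_cases hzu : z = u
  · subst hzu; simp [huv, hmem]
  by_cases hzv : z = v
  · subst hzv; simp [hzu, hmem]
  · simp [hzu, hzv, hmem]

lemma IsBisimplicialEdge.isVertexCutSet_insert (huv : G.IsBisimplicialEdge u v)
    {T : Set ↥({u, v} : Set V)ᶜ} (hT : (G.induce ({u, v} : Set V)ᶜ).IsVertexCutSet T) :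
    G.IsVertexCutSet (insert u (Subtype.val '' T)) ∨
      G.IsVertexCutSet (insert v (Subtype.val '' T)) := by
  have hT' : ¬(G.induce (Subtype.val '' Tᶜ)).Preconnected :=
    fun h => hT ((induceInduceIso _ _).preconnected_iff.2 h)
  rw [IsVertexCutSet, IsVertexCutSet, compl_insert_image_val (compl_compl _) huv.1.ne,
    compl_insert_image_val (by rw [compl_compl, Set.pair_comm]) huv.1.ne.symm]
  by_contra! h
  exact hT' (huv.preconnected_induce h.2 h.1)

section Finite

variable [Finite V]

lemma vertexConnectivity_le_ncard {S : Set V} (hS : G.IsVertexCutSet S) :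
    G.vertexConnectivity ≤ S.ncard := by
  rw [vertexConnectivity, if_pos ⟨S, hS⟩]
  exact Nat.sInf_le ⟨S, rfl, hS⟩

lemma exists_isVertexCutSet_ncard_eq_vertexConnectivity (h : ∃ S, G.IsVertexCutSet S) :
    ∃ S, G.IsVertexCutSet S ∧ S.ncard = G.vertexConnectivity := by
  rw [vertexConnectivity, if_pos h]
  obtain ⟨S, hS⟩ := h
  obtain ⟨T, hT, hTS⟩ := Nat.sInf_mem (s := {n | ∃ S : Set V, S.ncard = n ∧ G.IsVertexCutSet S})
    ⟨S.ncard, S, rfl, hS⟩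
  exact ⟨T, hTS, hT⟩

lemma vertexConnectivity_eq_card_sub_one (h : ¬∃ S, G.IsVertexCutSet S) :
    G.vertexConnectivity = Nat.card V - 1 := by
  rw [vertexConnectivity, if_neg h]

lemma vertexConnectivity_le_card_sub_one : G.vertexConnectivity ≤ Nat.card V - 1 := by
  by_cases h : ∃ S, G.IsVertexCutSet S
  · obtain ⟨S, hS⟩ := h
    have hSc : Sᶜ.Nontrivial := by
      by_contra hsub
      exact hS fun x y => by
        rw [Subtype.ext (Set.not_nontrivial_iff.1 hsub x.2 y.2)]
    have := Set.one_lt_ncard_iff_nontrivial.2 hSc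
    have := Set.ncard_add_ncard_compl S
    have := vertexConnectivity_le_ncard hS
    omega
  · exact (vertexConnectivity_eq_card_sub_one h).le

lemma ncard_compl_pair {x y : V} (hne : x ≠ y) : ({x, y} : Set V)ᶜ.ncard = Nat.card V - 2 := by
  have := Set.ncard_add_ncard_compl ({x, y} : Set V)
  rw [Set.ncard_pair hne] at this
  omega

lemma vertexConnectivity_le_card_sub_two {x y : V} (hne : x ≠ y) (hxy : ¬G.Adj x y) :
    G.vertexConnectivity ≤ Nat.card V - 2 :=
  (vertexConnectivity_le_ncard (isVertexCutSet_compl_pair hne hxy)).trans_eq (ncard_compl_pair hne)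

lemma IsBisimplicialEdge.vertexConnectivity_le_add_one (huv : G.IsBisimplicialEdge u v)
    (hcut : ∃ T, (G.induce ({u, v} : Set V)ᶜ).IsVertexCutSet T) :
    G.vertexConnectivity ≤ (G.induce ({u, v} : Set V)ᶜ).vertexConnectivity + 1 := by
  obtain ⟨T, hT, hTcard⟩ := exists_isVertexCutSet_ncard_eq_vertexConnectivity hcut
  have hcard (w : V) : (insert w (Subtype.val '' T)).ncard ≤ T.ncard + 1 := by
    rw [← Set.ncard_image_of_injective T Subtype.val_injective]
    exact Set.ncard_insert_le _ _
  rw [← hTcard]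
  rcases huv.isVertexCutSet_insert hT with h | h
  exacts [(vertexConnectivity_le_ncard h).trans (hcard u),
    (vertexConnectivity_le_ncard h).trans (hcard v)]

lemma Colorable.vertexConnectivity_le_card_sub_two (hG : G.Colorable 2) (huv : G.Adj u v)
    {w : V} (hwu : w ≠ u) (hwv : w ≠ v) : G.vertexConnectivity ≤ Nat.card V - 2 := by
  classical
  have hno_triangle : ¬(G.Adj u w ∧ G.Adj v w) := fun h =>
    hG.cliqueFree (by norm_num : 2 < 3) {u, v, w} (is3Clique_triple_iff.2 ⟨huv, h⟩)
  rcases not_and_or.1 hno_triangle with h | h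
  exacts [SimpleGraph.vertexConnectivity_le_card_sub_two hwu.symm h,
    SimpleGraph.vertexConnectivity_le_card_sub_two hwv.symm h]

end Finite

end SimpleGraph

theorem stmt7_general [Finite V] (G : SimpleGraph V) (hcb : G.ChordalBipartite) (k : ℕ)
    (hk : G.vertexConnectivity = k) (u v : V)
    (huv : G.IsBisimplicialEdge u v) :
    k - 1 ≤ (G.induce (({u, v} : Set V)ᶜ)).vertexConnectivity := by
  subst hk
  by_cases hcut : ∃ T, (G.induce ({u, v} : Set V)ᶜ).IsVertexCutSet T
  · have := huv.vertexConnectivity_le_add_one hcut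
    omega
  rw [vertexConnectivity_eq_card_sub_one hcut, Nat.card_coe_set_eq, ncard_compl_pair huv.1.ne]
  by_cases hw : ∃ w, w ≠ u ∧ w ≠ v
  · obtain ⟨w, hwu, hwv⟩ := hw
    have := hcb.1.vertexConnectivity_le_card_sub_two huv.1 hwu hwv
    omega
  · have hV : Nat.card V ≤ 2 := by
      rw [← Set.ncard_univ, ← Set.ncard_pair huv.1.ne]
      refine Set.ncard_le_ncard fun w _ => ?_
      by_contra h
      simp only [Set.mem_insert_iff, Set.mem_singleton_iff, not_or] at h
      exact hw ⟨w, h⟩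
    have := G.vertexConnectivity_le_card_sub_one
    omega

theorem stmt7 [Finite V] (G : SimpleGraph V) (hcb : G.ChordalBipartite) (k : ℕ)
    (hk : G.vertexConnectivity = k) (hk1 : 1 ≤ k) (u v : V)
    (huv : G.IsBisimplicialEdge u v) :
    k - 1 ≤ (G.induce (({u, v} : Set V)ᶜ)).vertexConnectivity :=
  stmt7_general G hcb k hk u v huv
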